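/- arXiv:1707.02816 — 3 statements merged into one kernel-verified Lean document; each statement's English description precedes it below -/
import Mathlib

section
/- Let N ≥ 1 and let Ω ⊆ ℝ^N be a set such that P_a Ω = Ω for every a ≥ 0 and P̃_a Ω = Ω for every a ≤ 0. Then Ω is Steiner symmetric with respect to the hyperplane H_0 = {x : x₁ = 0}. -/
open Set MeasureTheory

noncomputable section

/-- Reflection `σ_a` of `x` in the hyperplane `H_a = {x : x₁ = a}` in `ℝ^N`. -/
def reflH {N : ℕ} (hN : 0 < N) (a : ℝ) (x : Fin N → ℝ) : Fin N → ℝ :=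
  Function.update x ⟨0, hN⟩ (2 * a - x ⟨0, hN⟩)

/-- Set polarization `P_a Ω`: equals `Ω ∩ σ_a(Ω)` on `Σ_a⁺ = {x₁ > a}`,
`Ω ∪ σ_a(Ω)` on `Σ_a⁻ = {x₁ < a}`, and `Ω` on `H_a`. -/
def polSet {N : ℕ} (hN : 0 < N) (a : ℝ) (Ω : Set (Fin N → ℝ)) : Set (Fin N → ℝ) :=
  {x | if a < x ⟨0, hN⟩ then x ∈ Ω ∧ reflH hN a x ∈ Ω
       else if x ⟨0, hN⟩ < a then x ∈ Ω ∨ reflH hN a x ∈ Ω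
       else x ∈ Ω}

/-- Set polarization `P̃_a Ω`: equals `Ω ∪ σ_a(Ω)` on `Σ_a⁺`,
`Ω ∩ σ_a(Ω)` on `Σ_a⁻`, and `Ω` on `H_a`. -/
def polSetDual {N : ℕ} (hN : 0 < N) (a : ℝ) (Ω : Set (Fin N → ℝ)) : Set (Fin N → ℝ) :=
  {x | if a < x ⟨0, hN⟩ then x ∈ Ω ∨ reflH hN a x ∈ Ω
       else if x ⟨0, hN⟩ < a then x ∈ Ω ∧ reflH hN a x ∈ Ω
       else x ∈ Ω}

/-- Function polarization `P_a v`. -/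
def polFun {N : ℕ} (hN : 0 < N) (a : ℝ) (v : (Fin N → ℝ) → ℝ) (x : Fin N → ℝ) : ℝ :=
  if a < x ⟨0, hN⟩ then min (v x) (v (reflH hN a x))
  else if x ⟨0, hN⟩ < a then max (v x) (v (reflH hN a x))
  else v x

/-- `Ω` is Steiner symmetric with respect to the hyperplane `H_0 = {x : x₁ = 0}`:
for every `b ∈ Ω` and every `s` with `|s| ≤ |b₁|`, the point `(s, b₂, …, b_N)` is in `Ω`. -/
def SteinerSymmetric {N : ℕ} (hN : 0 < N) (Ω : Set (Fin N → ℝ)) : Prop :=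
  ∀ b ∈ Ω, ∀ s : ℝ, |s| ≤ |b ⟨0, hN⟩| → Function.update b ⟨0, hN⟩ s ∈ Ω


/-! Reflecting in `H_a` with `a = (b₁ + s)/2` moves `b` to `(s, b₂, …, b_N)`; when `s < b₁` the point
`b` lies in `Σ_a⁺`, where membership in `P_a Ω` forces its reflection into `Ω`, and `a ≥ 0` as soon
as `|s| ≤ b₁`. The case `b₁ < 0` is the mirror image with `P̃_a` and `a ≤ 0`. -/

section

variable {N : ℕ} (hN : 0 < N)

theorem reflH_midpoint (b : Fin N → ℝ) (s : ℝ) :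
    reflH hN ((b ⟨0, hN⟩ + s) / 2) b = Function.update b ⟨0, hN⟩ s := by
  unfold reflH
  congr 1
  ring

variable {hN} {Ω : Set (Fin N → ℝ)} {a : ℝ} {x : Fin N → ℝ}

theorem reflH_mem_of_mem_polSet (hx : x ∈ polSet hN a Ω) (ha : a < x ⟨0, hN⟩) :
    reflH hN a x ∈ Ω := by
  simp only [polSet, mem_ofPred_eq, if_pos ha] at hx
  exact hx.2

theorem reflH_mem_of_mem_polSetDual (hx : x ∈ polSetDual hN a Ω) (ha : x ⟨0, hN⟩ < a) :
    reflH hN a x ∈ Ω := by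
  simp only [polSetDual, mem_ofPred_eq, if_neg ha.not_gt, if_pos ha] at hx
  exact hx.2

theorem update_mem_of_polSet_eq_self {b : Fin N → ℝ} {s : ℝ}
    (hΩ : polSet hN ((b ⟨0, hN⟩ + s) / 2) Ω = Ω) (hb : b ∈ Ω) (hs : s < b ⟨0, hN⟩) :
    Function.update b ⟨0, hN⟩ s ∈ Ω := by
  rw [← reflH_midpoint]
  exact reflH_mem_of_mem_polSet (hΩ.symm ▸ hb) (by linarith)

theorem update_mem_of_polSetDual_eq_self {b : Fin N → ℝ} {s : ℝ}
    (hΩ : polSetDual hN ((b ⟨0, hN⟩ + s) / 2) Ω = Ω) (hb : b ∈ Ω) (hs : b ⟨0, hN⟩ < s) :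
    Function.update b ⟨0, hN⟩ s ∈ Ω := by
  rw [← reflH_midpoint]
  exact reflH_mem_of_mem_polSetDual (hΩ.symm ▸ hb) (by linarith)

end

/-- If `P_a Ω = Ω` for all `a ≥ 0` and `P̃_a Ω = Ω` for all `a ≤ 0`, then `Ω` is
Steiner symmetric with respect to `H_0`. -/
theorem steinerSymmetric_of_polSet_eq_self {N : ℕ} (hN : 1 ≤ N) (Ω : Set (Fin N → ℝ))
    (h₁ : ∀ a : ℝ, 0 ≤ a → polSet hN a Ω = Ω)
    (h₂ : ∀ a : ℝ, a ≤ 0 → polSetDual hN a Ω = Ω) :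
    SteinerSymmetric hN Ω := by
  intro b hb s hs
  obtain rfl | hne := eq_or_ne s (b ⟨0, hN⟩)
  · simpa using hb
  rcases le_or_gt 0 (b ⟨0, hN⟩) with hb₁ | hb₁
  · rw [abs_of_nonneg hb₁] at hs
    have hlt : s < b ⟨0, hN⟩ := lt_of_le_of_ne (le_of_abs_le hs) hne
    exact update_mem_of_polSet_eq_self (h₁ _ (by linarith [neg_le_of_abs_le hs])) hb hlt
  · rw [abs_of_neg hb₁] at hs
    have hlt : b ⟨0, hN⟩ < s := lt_of_le_of_ne (by linarith [neg_le_of_abs_le hs]) hne.symm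
    exact update_mem_of_polSetDual_eq_self (h₂ _ (by linarith [le_of_abs_le hs])) hb hlt
end
end

section
/- Let N ≥ 1, let Ω ⊆ ℝ^N be Steiner symmetric with respect to the hyperplane H_0 = {x : x₁ = 0}, and let v : ℝ^N → ℝ satisfy {x : v(x) ≠ 0} ⊆ Ω. Then for every a ≥ 0 one has {x : (P_a v)(x) > 0} ⊆ Ω, and for every a ≤ 0 one has {x : (P_a v)(x) < 0} ⊆ Ω. -/
open Set MeasureTheory

noncomputable section

lemma reflH_mem_of_steiner {N : ℕ} (hN : 0 < N) {Ω : Set (Fin N → ℝ)}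
    (hΩ : SteinerSymmetric hN Ω) (a : ℝ) (x : Fin N → ℝ)
    (h : reflH hN a x ∈ Ω) (habs : |x ⟨0, hN⟩| ≤ |2 * a - x ⟨0, hN⟩|) : x ∈ Ω := by
  have h2 : reflH hN a x ⟨0, hN⟩ = 2 * a - x ⟨0, hN⟩ := by
    simp [reflH]
  have := hΩ _ h (x ⟨0, hN⟩) (by rw [h2]; exact habs)
  simpa [reflH, Function.update_idem, Function.update_eq_self] using this

/-- If `Ω` is Steiner symmetric w.r.t. `H_0` and the support of `v` is contained in `Ω`,
then for every `a ≥ 0` the positivity set of `P_a v` is contained in `Ω`, and for every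
`a ≤ 0` the negativity set of `P_a v` is contained in `Ω`. -/
theorem polFun_support_subset {N : ℕ} (hN : 1 ≤ N) (Ω : Set (Fin N → ℝ))
    (hΩ : SteinerSymmetric hN Ω) (v : (Fin N → ℝ) → ℝ)
    (hv : {x : Fin N → ℝ | v x ≠ 0} ⊆ Ω) :
    (∀ a : ℝ, 0 ≤ a → {x : Fin N → ℝ | 0 < polFun hN a v x} ⊆ Ω) ∧
    (∀ a : ℝ, a ≤ 0 → {x : Fin N → ℝ | polFun hN a v x < 0} ⊆ Ω) := by
  constructor
  · intro a ha x hx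
    simp only [Set.mem_setOf_eq, polFun] at hx
    split_ifs at hx with h1 h2
    · exact hv (ne_of_gt (lt_of_lt_of_le hx (min_le_left _ _)))
    · rcases lt_or_ge 0 (v x) with hvx | hvx
      · exact hv (ne_of_gt hvx)
      · have hσ : 0 < v (reflH hN a x) := by
          rcases max_cases (v x) (v (reflH hN a x)) with ⟨he, _⟩ | ⟨he, _⟩ <;> rw [he] at hx <;> linarith
        refine reflH_mem_of_steiner hN hΩ a x (hv (ne_of_gt hσ)) ?_
        have hle := le_abs_self (2 * a - x ⟨0, hN⟩)
        rw [abs_le]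
        constructor <;> [skip; skip] <;> nlinarith [neg_abs_le (2 * a - x ⟨0, hN⟩)]
    · exact hv (ne_of_gt hx)
  · intro a ha x hx
    simp only [Set.mem_setOf_eq, polFun] at hx
    split_ifs at hx with h1 h2
    · rcases lt_or_ge (v x) 0 with hvx | hvx
      · exact hv (ne_of_lt hvx)
      · have hσ : v (reflH hN a x) < 0 := by
          rcases min_cases (v x) (v (reflH hN a x)) with ⟨he, _⟩ | ⟨he, _⟩ <;> rw [he] at hx <;> linarith
        refine reflH_mem_of_steiner hN hΩ a x (hv (ne_of_lt hσ)) ?_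
        have hcomm : |2 * a - x ⟨0, hN⟩| = |x ⟨0, hN⟩ - 2 * a| := abs_sub_comm _ _
        have hle := le_abs_self (x ⟨0, hN⟩ - 2 * a)
        rw [abs_le, hcomm]
        constructor <;> nlinarith [neg_abs_le (x ⟨0, hN⟩ - 2 * a)]
    · exact hv (ne_of_lt (lt_of_le_of_lt (le_max_left _ _) hx))
    · exact hv (ne_of_lt hx)
end
end

section
/- Let N ≥ 1, a ∈ ℝ, and let v : ℝ^N → ℝ be Borel measurable. Then v and its polarization P_a v are equimeasurable: for every t ∈ ℝ, the Lebesgue measure of {x ∈ ℝ^N : (P_a v)(x) > t} equals the Lebesgue measure of {x ∈ ℝ^N : v(x) > t}. -/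
open Set MeasureTheory

noncomputable section

lemma reflH_measurePreserving {N : ℕ} (hN : 0 < N) (a : ℝ) :
    MeasurePreserving (reflH hN a) volume volume := by
  classical
  have h : MeasurePreserving
      (fun (x : Fin N → ℝ) (j : Fin N) =>
        (if j = ⟨0, hN⟩ then fun y : ℝ => 2 * a - y else id) (x j)) volume volume := by
    apply measurePreserving_pi
    intro j
    split_ifs
    · exact Measure.measurePreserving_sub_left volume (2 * a)
    · exact MeasurePreserving.id _
  have he : (fun (x : Fin N → ℝ) (j : Fin N) =>
      (if j = ⟨0, hN⟩ then fun y : ℝ => 2 * a - y else id) (x j)) = reflH hN a := by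
    funext x j
    simp only [reflH, Function.update_apply]
    split_ifs with hj
    · subst hj; rfl
    · rfl
  rwa [he] at h

lemma reflH_involutive {N : ℕ} (hN : 0 < N) (a : ℝ) (x : Fin N → ℝ) :
    reflH hN a (reflH hN a x) = x := by
  classical
  simp only [reflH, Function.update_idem, Function.update_self]
  have : 2 * a - (2 * a - x ⟨0, hN⟩) = x ⟨0, hN⟩ := by ring
  rw [this, Function.update_eq_self]

/-- `v` and `P_a v` are equimeasurable: the superlevel sets `{P_a v > t}` and `{v > t}`
have the same Lebesgue measure for every `t`. -/
theorem polFun_equimeasurable {N : ℕ} (hN : 1 ≤ N) (a : ℝ) (v : (Fin N → ℝ) → ℝ)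
    (hv : Measurable v) :
    ∀ t : ℝ,
      volume {x : Fin N → ℝ | t < polFun hN a v x} = volume {x : Fin N → ℝ | t < v x} := by
  classical
  intro t
  set i : Fin N := ⟨0, hN⟩ with hi
  set σ := reflH hN a with hσdef
  have hσ : MeasurePreserving σ volume volume := reflH_measurePreserving hN a
  have hσi : ∀ x : Fin N → ℝ, σ x i = 2 * a - x i := fun x => by
    simp [hσdef, reflH, hi]
  set A : Set (Fin N → ℝ) := {x | t < v x} with hA
  set B : Set (Fin N → ℝ) := σ ⁻¹' A with hB
  set P : Set (Fin N → ℝ) := {x | t < polFun hN a v x} with hP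
  have mA : MeasurableSet A := measurableSet_lt measurable_const hv
  have mB : MeasurableSet B := hσ.measurable mA
  have mσ : Measurable σ := hσ.measurable
  have mpol : Measurable (polFun hN a v) := by
    apply Measurable.ite (measurableSet_lt measurable_const (measurable_pi_apply i))
      (hv.min (hv.comp mσ))
    exact Measurable.ite (measurableSet_lt (measurable_pi_apply i) measurable_const)
      (hv.max (hv.comp mσ)) hv
  have mP : MeasurableSet P := measurableSet_lt measurable_const mpol
  set Sp : Set (Fin N → ℝ) := {x | a < x i} with hSp
  set Sm : Set (Fin N → ℝ) := {x | x i < a} with hSm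
  have mSp : MeasurableSet Sp := measurableSet_lt measurable_const (measurable_pi_apply i)
  have mSm : MeasurableSet Sm := measurableSet_lt (measurable_pi_apply i) measurable_const
  -- the hyperplane is null
  have hHnull : volume {x : Fin N → ℝ | x i = a} = 0 := by
    have heq : {x : Fin N → ℝ | x i = a} =
        Set.pi Set.univ (fun j => if j = i then ({a} : Set ℝ) else Set.univ) := by
      ext x
      simp only [Set.mem_setOf_eq, Set.mem_pi, Set.mem_univ, forall_true_left]
      constructor
      · intro h j; split_ifs with hj
        · subst hj; simpa using h
        · trivial
      · intro h; have := h i; simpa using this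
    rw [heq, volume_pi_pi]
    refine Finset.prod_eq_zero (Finset.mem_univ i) ?_
    simp
  -- preimage facts
  have hpreB : σ ⁻¹' B = A := by
    ext x; simp [hB, hσdef, reflH_involutive hN a x]
  have hpreSm : σ ⁻¹' Sm = Sp := by
    ext x
    simp only [Set.mem_preimage, hSm, hSp, Set.mem_setOf_eq, hσi]
    constructor <;> intro h <;> linarith
  -- splitting a measurable set along the hyperplane
  have split : ∀ S : Set (Fin N → ℝ), MeasurableSet S →
      volume S = volume (S ∩ Sp) + volume (S ∩ Sm) := by
    intro S mS
    have h1 : volume (S ∩ {x | x i = a}) = 0 :=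
      measure_mono_null Set.inter_subset_right hHnull
    have h2 : volume S = volume (S \ {x | x i = a}) := by
      rw [← measure_inter_add_diff S
        (measurableSet_eq_fun (measurable_pi_apply i) measurable_const), h1, zero_add]
    have h3 : S \ {x | x i = a} = (S ∩ Sp) ∪ (S ∩ Sm) := by
      ext x
      simp only [Set.mem_diff, Set.mem_setOf_eq, Set.mem_union, Set.mem_inter_iff, hSp, hSm]
      constructor
      · rintro ⟨hs, hne⟩
        rcases lt_or_gt_of_ne hne with h | h
        · exact Or.inr ⟨hs, h⟩
        · exact Or.inl ⟨hs, h⟩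
      · rintro (⟨hs, h⟩ | ⟨hs, h⟩) <;>
          exact ⟨hs, by intro he; rw [he] at h; exact lt_irrefl a h⟩
    rw [h2, h3, measure_union ?_ (mS.inter mSm)]
    refine Set.disjoint_left.mpr ?_
    intro x hx1 hx2
    simp only [hSp, hSm, Set.mem_inter_iff, Set.mem_setOf_eq] at hx1 hx2
    linarith [hx1.2, hx2.2]
  -- level set identities
  have hPSp : P ∩ Sp = (A ∩ B) ∩ Sp := by
    ext x
    simp only [Set.mem_inter_iff, hP, hA, hB, hSp, Set.mem_setOf_eq, Set.mem_preimage]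
    constructor
    · rintro ⟨h1, h2⟩
      rw [polFun, if_pos h2] at h1
      exact ⟨⟨(lt_min_iff.mp h1).1, (lt_min_iff.mp h1).2⟩, h2⟩
    · rintro ⟨⟨h1, h1'⟩, h2⟩
      exact ⟨by rw [polFun, if_pos h2]; exact lt_min_iff.mpr ⟨h1, h1'⟩, h2⟩
  have hPSm : P ∩ Sm = (A ∪ B) ∩ Sm := by
    ext x
    simp only [Set.mem_inter_iff, hP, hA, hB, hSm, Set.mem_setOf_eq, Set.mem_union,
      Set.mem_preimage]
    constructor
    · rintro ⟨h1, h2⟩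
      rw [polFun, if_neg (by push_neg; linarith), if_pos h2] at h1
      exact ⟨lt_max_iff.mp h1, h2⟩
    · rintro ⟨h1, h2⟩
      refine ⟨?_, h2⟩
      rw [polFun, if_neg (by push_neg; linarith), if_pos h2]
      exact lt_max_iff.mpr h1
  -- measure computations
  have e1 : volume ((A ∪ B) ∩ Sm) = volume ((A ∪ B) ∩ Sp) := by
    have : σ ⁻¹' ((A ∪ B) ∩ Sm) = (B ∪ A) ∩ Sp := by
      rw [Set.preimage_inter, Set.preimage_union, hpreB, hpreSm]
    calc volume ((A ∪ B) ∩ Sm) = volume (σ ⁻¹' ((A ∪ B) ∩ Sm)) :=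
          (hσ.measure_preimage ((mA.union mB).inter mSm).nullMeasurableSet).symm
      _ = volume ((B ∪ A) ∩ Sp) := by rw [this]
      _ = volume ((A ∪ B) ∩ Sp) := by rw [Set.union_comm]
  have e2 : volume (B ∩ Sp) = volume (A ∩ Sm) := by
    have : σ ⁻¹' (A ∩ Sm) = B ∩ Sp := by
      rw [Set.preimage_inter, hpreSm]
    rw [← this, hσ.measure_preimage (mA.inter mSm).nullMeasurableSet]
  have e3 : volume ((A ∩ B) ∩ Sp) + volume ((A ∪ B) ∩ Sp)
      = volume (A ∩ Sp) + volume (B ∩ Sp) := by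
    have hu : (A ∩ Sp) ∪ (B ∩ Sp) = (A ∪ B) ∩ Sp := (Set.union_inter_distrib_right A B Sp).symm
    have hint : (A ∩ Sp) ∩ (B ∩ Sp) = (A ∩ B) ∩ Sp := by
      ext x; simp only [Set.mem_inter_iff]; tauto
    rw [← hu, ← hint, add_comm]
    exact measure_union_add_inter _ (mB.inter mSp)
  calc volume P = volume (P ∩ Sp) + volume (P ∩ Sm) := split P mP
    _ = volume ((A ∩ B) ∩ Sp) + volume ((A ∪ B) ∩ Sm) := by rw [hPSp, hPSm]
    _ = volume ((A ∩ B) ∩ Sp) + volume ((A ∪ B) ∩ Sp) := by rw [e1]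
    _ = volume (A ∩ Sp) + volume (B ∩ Sp) := e3
    _ = volume (A ∩ Sp) + volume (A ∩ Sm) := by rw [e2]
    _ = volume A := (split A mA).symm
end
end
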